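/- arXiv:1702.06816 — 6 statements merged into one kernel-verified Lean document; each statement's English description precedes it below -/
import Mathlib

section
/- Define generating functions by the recurrence R_k(z) = z·R_{k-1}(z)/(1 - R_{k-1}(z)) for k ≥ 1, with R₀(z) = (1-√(1-4z))/2. Then for all k ≥ 1, R_k(z) = (1-z)·z^{k-2}·R₀(z)³ / (1 + z^{k-2}·R₀(z)³). -/
lemma rbound (z : ℝ) (h2 : |z| < 1 / 4) :
    |(1 - Real.sqrt (1 - 4 * z)) / 2| ≤ 2 * |z| := by
  have hz := abs_lt.mp h2
  have hs : (0:ℝ) ≤ Real.sqrt (1 - 4 * z) := Real.sqrt_nonneg _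
  have hsq : Real.sqrt (1 - 4 * z) ^ 2 = 1 - 4 * z := Real.sq_sqrt (by nlinarith)
  set s := Real.sqrt (1 - 4 * z) with hsdef
  have e1 : |1 - s| * |1 + s| = |4 * z| := by
    rw [← abs_mul]; congr 1; linear_combination -hsq
  have e2 : |1 + s| = 1 + s := abs_of_nonneg (by linarith)
  have e3 : |1 - s| ≤ 4 * |z| := by
    calc |1 - s| ≤ |1 - s| * (1 + s) :=
          le_mul_of_one_le_right (abs_nonneg _) (by linarith)
      _ = 4 * |z| := by rw [← e2, e1, abs_mul]; simp [abs_of_nonneg]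
  rw [abs_div]
  rw [show |(2:ℝ)| = 2 by norm_num]
  linarith

lemma aux_pos (z : ℝ) (h1 : 0 < |z|) (h2 : |z| < 1 / 4) (m : ℤ) (hm : -1 ≤ m) :
    0 < 1 + z ^ m * ((1 - Real.sqrt (1 - 4 * z)) / 2) ^ 3 := by
  have hb := rbound z h2
  set r := (1 - Real.sqrt (1 - 4 * z)) / 2 with hrdef
  have habs : |z ^ m * r ^ 3| < 1 := by
    have habs0 : |z ^ m| = |z| ^ m := by
      rcases m with n | n
      · simp [abs_pow]
      · simp [zpow_negSucc, abs_inv, abs_pow]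
    rw [abs_mul, habs0, abs_pow]
    show |z| ^ m * |r| ^ 3 < 1
    have h3 : |r| ^ 3 ≤ (2 * |z|) ^ 3 := pow_le_pow_left₀ (abs_nonneg _) hb 3
    have h4 : |z| ^ m ≤ |z| ^ (-1 : ℤ) :=
      zpow_le_zpow_right_of_le_one₀ h1 (by linarith) hm
    have h5 : |z| ^ (-1 : ℤ) = |z|⁻¹ := by simp
    have h6 : |z| ^ m * |r| ^ 3 ≤ |z|⁻¹ * (2 * |z|) ^ 3 := by
      apply mul_le_mul (h5 ▸ h4) h3 (pow_nonneg (abs_nonneg _) 3)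
      positivity
    have h7 : |z|⁻¹ * (2 * |z|) ^ 3 = 8 * |z| ^ 2 := by
      field_simp
      ring
    nlinarith
  have := abs_lt.mp habs
  linarith

/-- If `R 0 = (1-√(1-4z))/2` and `R k = z·R (k-1)/(1 - R (k-1))` for `k ≥ 1`
(as functions on the punctured disc `0 < |z| < 1/4`), then
`R k = (1-z)·z^(k-2)·(R 0)³ / (1 + z^(k-2)·(R 0)³)` for all `k ≥ 1`. -/
theorem protected_tree_gf_closed_form (R : ℕ → ℝ → ℝ)
    (h0 : ∀ z : ℝ, 0 < |z| → |z| < 1 / 4 → R 0 z = (1 - Real.sqrt (1 - 4 * z)) / 2)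
    (hrec : ∀ k : ℕ, 1 ≤ k → ∀ z : ℝ, 0 < |z| → |z| < 1 / 4 →
      R k z = z * R (k - 1) z / (1 - R (k - 1) z)) :
    ∀ k : ℕ, 1 ≤ k → ∀ z : ℝ, 0 < |z| → |z| < 1 / 4 →
      R k z = (1 - z) * z ^ ((k : ℤ) - 2) * (R 0 z) ^ 3 /
        (1 + z ^ ((k : ℤ) - 2) * (R 0 z) ^ 3) := by
  intro k hk
  induction k, hk using Nat.le_induction with
  | base =>
    intro z hz1 hz2
    have hz : z ≠ 0 := by intro h; simp [h] at hz1
    have hzlt := abs_lt.mp hz2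
    have hs : (0:ℝ) ≤ Real.sqrt (1 - 4 * z) := Real.sqrt_nonneg _
    have hsq : Real.sqrt (1 - 4 * z) ^ 2 = 1 - 4 * z := Real.sq_sqrt (by nlinarith)
    have hr0 := h0 z hz1 hz2
    have hrec1 := hrec 1 le_rfl z hz1 hz2
    norm_num at hrec1
    have hpos := aux_pos z hz1 hz2 (-1) le_rfl
    rw [← hr0] at hpos
    rw [zpow_neg_one] at hpos
    rw [hrec1, show ((1:ℕ):ℤ) - 2 = -1 by norm_num, zpow_neg_one]
    set r := R 0 z with hrdef
    have hr2 : r ^ 2 = r - z := by rw [hr0]; nlinarith [hsq]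
    have hr1 : r ≤ 1 / 2 := by rw [hr0]; linarith
    have hne1 : (1:ℝ) - r ≠ 0 := by
      have : (0:ℝ) < 1 - r := by linarith
      exact this.ne'
    have hden : 1 + z⁻¹ * r ^ 3 ≠ 0 := hpos.ne'
    have lhs : z * r / (1 - r) = r ^ 2 := by
      rw [div_eq_iff hne1]; linear_combination r * hr2
    have rhs : (1 - z) * z⁻¹ * r ^ 3 / (1 + z⁻¹ * r ^ 3) = r ^ 2 := by
      rw [div_eq_iff hden]
      field_simp
      linear_combination (-r ^ 3 - r ^ 2) * hr2
    rw [lhs, rhs]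
  | succ k hk ih =>
    intro z hz1 hz2
    have hz : z ≠ 0 := by intro h; simp [h] at hz1
    have hr0 := h0 z hz1 hz2
    have hrec1 := hrec (k + 1) (by omega) z hz1 hz2
    simp only [Nat.add_sub_cancel] at hrec1
    have hIH := ih z hz1 hz2
    have hA : 0 < 1 + z ^ ((k : ℤ) - 2) * (R 0 z) ^ 3 := by
      rw [hr0]; exact aux_pos z hz1 hz2 _ (by omega)
    have hBB : 0 < 1 + z ^ ((k : ℤ) - 1) * (R 0 z) ^ 3 := by
      rw [hr0]; exact aux_pos z hz1 hz2 _ (by omega)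
    have hzz : z ^ ((k : ℤ) - 1) = z ^ ((k : ℤ) - 2) * z := by
      rw [show (k : ℤ) - 1 = ((k : ℤ) - 2) + 1 by ring, zpow_add_one₀ hz]
    rw [hzz] at hBB
    rw [hrec1, hIH, show (((k + 1 : ℕ)) : ℤ) - 2 = (k : ℤ) - 1 by push_cast; ring, hzz]
    set r := R 0 z with hrdef
    set P := z ^ ((k : ℤ) - 2) with hP
    have hAne : (1:ℝ) + P * r ^ 3 ≠ 0 := hA.ne'
    have hBne : (1:ℝ) + P * z * r ^ 3 ≠ 0 := hBB.ne'
    have h1 : 1 - (1 - z) * P * r ^ 3 / (1 + P * r ^ 3) =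
        (1 + P * z * r ^ 3) / (1 + P * r ^ 3) := by
      field_simp; ring
    rw [h1]
    field_simp
end

section
/- Let R₀ = (1-√(1-4z))/2 and for k ≥ 1 let R_k = (1-z)z^{k-2}R₀³/(1 + z^{k-2}R₀³). Then R_k satisfies R_k = z·R_{k-1}/(1 - R_{k-1}) for all k ≥ 2. -/
/-! Write `R k = g (a k)` with `g a = (1 - z) a / (1 + a)` and `a k = z^(k-2) R₀³`, so that
`a k = z · a (k-1)`. The rational identity `g (z a) = z g a / (1 - g a)` then gives the recurrence
as soon as `1 + a (k-1) ≠ 0`. That holds because `R₀ (1 + √(1 - 4z)) = 2z` gives `|R₀| ≤ 2|z|`, whence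
`|a (k-1)| ≤ 8|z|² < 1`. -/

def treeRatio {K : Type*} [Field K] (z a : K) : K := (1 - z) * a / (1 + a)

theorem treeRatio_mul_left {K : Type*} [Field K] {z a : K} (ha : 1 + a ≠ 0) :
    treeRatio z (z * a) = z * treeRatio z a / (1 - treeRatio z a) := by
  have hden : 1 - treeRatio z a = (1 + z * a) / (1 + a) := by
    unfold treeRatio
    field_simp
    ring
  rw [hden, treeRatio, treeRatio, mul_div_assoc', div_div_div_cancel_right₀ ha]
  ring

theorem abs_one_sub_sqrt_div_two_le {z : ℝ} (hz : z ≤ 1 / 4) :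
    |(1 - √(1 - 4 * z)) / 2| ≤ 2 * |z| := by
  set s := √(1 - 4 * z)
  have hs : 0 ≤ s := Real.sqrt_nonneg _
  have hprod : (1 - s) / 2 * (1 + s) = 2 * z := by
    have := Real.sq_sqrt (show 0 ≤ 1 - 4 * z by linarith)
    linear_combination -this / 2
  calc |(1 - s) / 2| ≤ |(1 - s) / 2| * (1 + s) :=
        le_mul_of_one_le_right (abs_nonneg _) (by linarith)
    _ = 2 * |z| := by
      rw [← abs_of_pos (show (0 : ℝ) < 1 + s by linarith), ← abs_mul, hprod, abs_mul, abs_two]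

theorem abs_zpow_sub_one_mul_cube_lt_one {z : ℝ} (hz0 : 0 < |z|) (hz : |z| < 1 / 4) (n : ℕ) :
    |z ^ ((n : ℤ) - 1) * ((1 - √(1 - 4 * z)) / 2) ^ 3| < 1 := by
  have hR := abs_one_sub_sqrt_div_two_le (abs_lt.mp hz).2.le
  have hzn : |z| ^ n ≤ 1 := pow_le_one₀ (abs_nonneg z) (by linarith)
  rw [zpow_sub_one₀ (abs_pos.mp hz0), zpow_natCast, abs_mul, abs_mul, abs_pow, abs_inv, abs_pow]
  calc |z| ^ n * |z|⁻¹ * |(1 - √(1 - 4 * z)) / 2| ^ 3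
      ≤ 1 * |z|⁻¹ * (2 * |z|) ^ 3 := by gcongr
    _ = 8 * |z| ^ 2 := by field_simp; ring
    _ < 1 := by nlinarith

/-- With `R₀ = (1-√(1-4z))/2` and `R k = (1-z)·z^(k-2)·R₀³/(1 + z^(k-2)·R₀³)` for `k ≥ 1`,
the recurrence `R k = z·R (k-1)/(1 - R (k-1))` holds for all `k ≥ 2`. -/
theorem protected_tree_gf_recurrence (z : ℝ) (hz0 : 0 < |z|) (hz : |z| < 1 / 4) :
    ∀ k : ℕ, 2 ≤ k →
      (fun k : ℕ =>
          (1 - z) * z ^ ((k : ℤ) - 2) * ((1 - Real.sqrt (1 - 4 * z)) / 2) ^ 3 /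
            (1 + z ^ ((k : ℤ) - 2) * ((1 - Real.sqrt (1 - 4 * z)) / 2) ^ 3)) k =
        z * (fun k : ℕ =>
          (1 - z) * z ^ ((k : ℤ) - 2) * ((1 - Real.sqrt (1 - 4 * z)) / 2) ^ 3 /
            (1 + z ^ ((k : ℤ) - 2) * ((1 - Real.sqrt (1 - 4 * z)) / 2) ^ 3)) (k - 1) /
          (1 - (fun k : ℕ =>
          (1 - z) * z ^ ((k : ℤ) - 2) * ((1 - Real.sqrt (1 - 4 * z)) / 2) ^ 3 /
            (1 + z ^ ((k : ℤ) - 2) * ((1 - Real.sqrt (1 - 4 * z)) / 2) ^ 3)) (k - 1)) := by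
  intro k hk
  obtain ⟨n, rfl⟩ := Nat.exists_eq_add_of_le' hk
  have hexp : ((n + 2 : ℕ) : ℤ) - 2 = 1 + ((n : ℤ) - 1) := by push_cast; ring
  have hexp_pred : ((n + 2 - 1 : ℕ) : ℤ) - 2 = (n : ℤ) - 1 := by omega
  have hsmall := abs_zpow_sub_one_mul_cube_lt_one hz0 hz n
  simp only [hexp, hexp_pred, zpow_add₀ (abs_pos.mp hz0), zpow_one, mul_assoc]
  exact treeRatio_mul_left fun h => by linarith [(abs_lt.mp hsmall).1]
end

section
/- For n ≥ 1 and k ≥ 1, the number r_{nk} of rooted plane trees with n vertices whose protection number is at least k equals the finite sum over j ≥ 1 of (-1)^{j-1}·[binom(2n-3-(2k-1)j, n-(k+1)j) - binom(2n-3-(2k-1)j, n-3-(k+1)j)]. -/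
/-- Rooted plane (ordered) trees: a root together with a (possibly empty) list of subtrees. -/
inductive PlaneTree : Type
  | node : List PlaneTree → PlaneTree

/-- Number of vertices of a rooted plane tree. -/
def PlaneTree.size : PlaneTree → ℕ
  | .node cs => 1 + (cs.attach.map (fun t => PlaneTree.size t.1)).sum
decreasing_by
  have := List.sizeOf_lt_of_mem t.2
  simp [PlaneTree.node.sizeOf_spec] at *
  omega

/-- The protection number of a rooted plane tree: `0` if the root is a leaf, otherwise
`1` plus the minimum of the protection numbers of the root's subtrees. -/
def PlaneTree.protectionNumber : PlaneTree → ℕ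
  | .node [] => 0
  | .node (c :: cs) =>
      1 + List.foldl min (PlaneTree.protectionNumber c)
            (cs.attach.map (fun t => PlaneTree.protectionNumber t.1))
decreasing_by
  · simp; omega
  · have := List.sizeOf_lt_of_mem t.2
    simp at *
    omega

/-- Binomial coefficient `binom a b` for integers, equal to `0` when `b < 0` or `b > a`. -/
def intChoose (a b : ℤ) : ℤ :=
  if 0 ≤ b ∧ b ≤ a then (Nat.choose a.toNat b.toNat : ℤ) else 0

/-!
Let `R_k` be the generating function of plane trees with protection number at least `k`, so
that `C = R_0` is the Catalan series, `C = x + C ^ 2`, i.e. `x = C (1 - C)`. A tree with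
protection number at least `k + 1` is a root above a nonempty sequence of trees with protection
number at least `k`, hence `R_{k+1} = x R_k / (1 - R_k)`. This recursion is solved by
`R_k ((1 - C) ^ 2 + C x ^ k) = (1 - x) C x ^ k`, that is `R_k = (1 - x) w / (1 + w)` with
`w = C x ^ k / (1 - C) ^ 2 = C ^ 3 x ^ (k - 2)`. Expanding `1 / (1 + w)` as a geometric series,
`[x^n] R_k = ∑_j (-1)^(j-1) [x^(n - (k-2) j)] (1 - x) C ^ (3 j)`, and the coefficients of the powers
of `C` are the ballot numbers `[x^m] C ^ p = binom(2m-p-1, m-p) - binom(2m-p-1, m-p-1)`.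
-/

open PowerSeries Finset

lemma intChoose_of_neg {a b : ℤ} (hb : b < 0) : intChoose a b = 0 := by
  rw [intChoose, if_neg]; omega

lemma intChoose_of_lt {a b : ℤ} (h : a < b) : intChoose a b = 0 := by
  rw [intChoose, if_neg]; omega

lemma intChoose_natCast (a b : ℕ) : intChoose a b = a.choose b := by
  rw [intChoose]
  split_ifs with h
  · simp
  · rw [Nat.choose_eq_zero_of_lt (by omega), Nat.cast_zero]

lemma intChoose_eq_add {a b : ℤ} (h : a ≠ 0 ∨ b ≠ 0) :
    intChoose a b = intChoose (a - 1) (b - 1) + intChoose (a - 1) b := by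
  rcases lt_or_ge b 0 with hb | hb
  · rw [intChoose_of_neg hb, intChoose_of_neg (by omega), intChoose_of_neg hb, add_zero]
  rcases lt_or_ge a b with hab | hab
  · rw [intChoose_of_lt hab, intChoose_of_lt (by omega), intChoose_of_lt (by omega), add_zero]
  obtain ⟨a, rfl⟩ : ∃ a' : ℕ, a = a' + 1 := ⟨(a - 1).toNat, by omega⟩
  obtain ⟨b, rfl⟩ := Int.eq_ofNat_of_zero_le hb
  rw [add_sub_cancel_right, show (a : ℤ) + 1 = ((a + 1 : ℕ) : ℤ) by push_cast; ring]
  rcases b with _ | b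
  · rw [intChoose_of_neg (b := ((0 : ℕ) : ℤ) - 1) (by norm_num), zero_add, intChoose_natCast,
      intChoose_natCast]
    simp
  · rw [show ((b + 1 : ℕ) : ℤ) - 1 = b by push_cast; ring, intChoose_natCast,
      intChoose_natCast, intChoose_natCast, Nat.choose_succ_succ', Nat.cast_add]

lemma intChoose_symm {a b : ℤ} (ha : 0 ≤ a) : intChoose a (a - b) = intChoose a b := by
  rcases lt_or_ge b 0 with hb | hb
  · rw [intChoose_of_neg hb, intChoose_of_lt (by omega)]
  rcases lt_or_ge a b with hab | hab
  · rw [intChoose_of_lt hab, intChoose_of_neg (by omega)]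
  · rw [intChoose, intChoose, if_pos (by omega), if_pos (by omega),
      show (a - b).toNat = a.toNat - b.toNat by omega, Nat.choose_symm (by omega)]

def ballot (m p : ℤ) : ℤ :=
  intChoose (2 * m - p - 1) (m - p) - intChoose (2 * m - p - 1) (m - p - 1)

lemma ballot_of_lt {m p : ℤ} (h : m < p) : ballot m p = 0 := by
  rw [ballot, intChoose_of_neg (by omega), intChoose_of_neg (by omega), sub_zero]

lemma ballot_zero_right (m : ℤ) : ballot m 0 = 0 := by
  rcases lt_or_ge m 1 with hm | hm
  · rw [ballot, intChoose_of_lt (a := 2 * m - 0 - 1) (b := m - 0) (by omega),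
      intChoose_of_neg (b := m - 0 - 1) (by omega), sub_zero]
  · rw [ballot, ← intChoose_symm (by omega)]
    ring_nf

lemma ballot_succ_succ {m p : ℤ} (h : 0 < m ∨ 0 < p) :
    ballot (m + 1) (p + 1) = ballot m p + ballot (m + 1) (p + 2) := by
  simp only [ballot]
  rw [intChoose_eq_add (a := 2 * (m + 1) - (p + 1) - 1) (b := m + 1 - (p + 1)) (by omega),
    intChoose_eq_add (a := 2 * (m + 1) - (p + 1) - 1) (b := m + 1 - (p + 1) - 1) (by omega)]
  ring_nf

lemma ballot_sub_ballot {m p : ℤ} (hp : 3 ≤ p) :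
    ballot m p - ballot (m - 1) p =
      intChoose (2 * m - p - 3) (m - p) - intChoose (2 * m - p - 3) (m - p - 3) := by
  simp only [ballot]
  rw [intChoose_eq_add (a := 2 * m - p - 1) (b := m - p) (by omega),
    intChoose_eq_add (a := 2 * m - p - 1) (b := m - p - 1) (by omega),
    intChoose_eq_add (a := 2 * m - p - 1 - 1) (b := m - p) (by omega),
    intChoose_eq_add (a := 2 * m - p - 1 - 1) (b := m - p - 1) (by omega),
    intChoose_eq_add (a := 2 * m - p - 1 - 1) (b := m - p - 1 - 1) (by omega)]
  ring_nf

lemma coeff_pow_of_lt {C : ℤ⟦X⟧} (hXC : X ∣ C) {m p : ℕ} (h : m < p) : coeff m (C ^ p) = 0 :=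
  X_pow_dvd_iff.mp (pow_dvd_pow_of_dvd hXC p) m h

theorem coeff_pow_eq_ballot {C : ℤ⟦X⟧} (hC : C = X + C ^ 2) (hXC : X ∣ C) {m p : ℕ}
    (hp : 1 ≤ p) : coeff m (C ^ p) = ballot m p := by
  -- `C ^ (p + 1) = X * C ^ p + C ^ (p + 2)` expresses the coefficient at `(m, p)` through
  -- two with smaller `2 * m - p`
  suffices ∀ d m p : ℕ, 1 ≤ p → 2 * m ≤ p + d → coeff m (C ^ p) = ballot m p from
    this (2 * m) m p hp (by omega)
  intro d
  induction d with
  | zero =>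
    intro m p hp h
    rw [coeff_pow_of_lt hXC (by omega), ballot_of_lt (by omega)]
  | succ d ih =>
    intro m p hp h
    rcases lt_or_ge m p with hmp | hmp
    · rw [coeff_pow_of_lt hXC hmp, ballot_of_lt (by exact_mod_cast hmp)]
    obtain ⟨m, rfl⟩ : ∃ m', m = m' + 1 := ⟨m - 1, by omega⟩
    obtain ⟨p, rfl⟩ : ∃ p', p = p' + 1 := ⟨p - 1, by omega⟩
    have hrec : C ^ (p + 1) = X * C ^ p + C ^ (p + 2) := by linear_combination C ^ p * hC
    rw [hrec, map_add, coeff_succ_X_mul, ih (m + 1) (p + 2) (by omega) (by omega)]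
    push_cast
    rcases p with _ | p
    · rw [pow_zero, coeff_one]
      rcases m with _ | m
      · norm_num [ballot, intChoose]
      · rw [if_neg m.succ_ne_zero, zero_add, Nat.cast_zero, zero_add,
          ballot_succ_succ (by omega), ballot_zero_right, zero_add]
        rfl
    · rw [ih m (p + 1) (by omega) (by omega)]
      push_cast
      rw [ballot_succ_succ (by omega)]

theorem coeff_one_sub_X_mul_pow {C : ℤ⟦X⟧} (hC : C = X + C ^ 2) (hXC : X ∣ C) {m p : ℕ}
    (hp : 3 ≤ p) :
    coeff m ((1 - X) * C ^ p) =
      intChoose (2 * m - p - 3) (m - p) - intChoose (2 * m - p - 3) (m - p - 3) := by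
  rw [← ballot_sub_ballot (by exact_mod_cast hp), sub_mul, one_mul, map_sub,
    coeff_pow_eq_ballot hC hXC (by omega)]
  rcases m with _ | m
  · rw [coeff_zero_X_mul, ballot_of_lt (m := (0 : ℕ) - 1) (by omega)]
  · rw [coeff_succ_X_mul, coeff_pow_eq_ballot hC hXC (by omega)]
    push_cast
    ring_nf

theorem coeff_one_sub_X_mul_pow_of_X_sq_mul {C w : ℤ⟦X⟧} (hC : C = X + C ^ 2) (hXC : X ∣ C)
    {k : ℕ} (hw : X ^ 2 * w = C ^ 3 * X ^ k) (n : ℕ) {j : ℕ} (hj : 1 ≤ j) :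
    coeff n ((1 - X) * w ^ j) =
      intChoose (2 * n - 3 - (2 * k - 1) * j) (n - (k + 1) * j) -
        intChoose (2 * n - 3 - (2 * k - 1) * j) (n - 3 - (k + 1) * j) := by
  have hshift : (1 - X) * w ^ j * X ^ (2 * j) = (1 - X) * C ^ (3 * j) * X ^ (k * j) := by
    rw [mul_assoc, pow_mul, ← mul_pow, mul_comm _ (X ^ 2), hw, mul_pow, ← pow_mul, ← pow_mul,
      mul_comm 3 j, mul_comm k j, mul_assoc]
  rw [← coeff_mul_X_pow _ (2 * j) n, hshift, coeff_mul_X_pow']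
  split_ifs with h
  · rw [coeff_one_sub_X_mul_pow hC hXC (by omega), Nat.cast_sub h]
    push_cast
    ring_nf
  · have hlt : (n : ℤ) + 2 * j < k * j := by exact_mod_cast not_le.mp h
    rw [intChoose_of_neg (b := n - (k + 1) * j) (by linarith),
      intChoose_of_neg (b := n - 3 - (k + 1) * j) (by linarith), sub_zero]

theorem mul_one_sub_sq_add_mul_pow_eq {A : Type*} [CommRing A] {x c : A} {r : ℕ → A}
    (hx : x = c * (1 - c)) (h0 : r 0 = c) (hr : ∀ k, r (k + 1) * (1 - r k) = x * r k)
    (k : ℕ) : r k * ((1 - c) ^ 2 + c * x ^ k) = (1 - x) * c * x ^ k := by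
  induction k with
  | zero => rw [h0, hx]; ring
  | succ k ih => linear_combination ((1 - c) ^ 2 + c * x ^ k) * hr k + (r (k + 1) + x) * ih

theorem eq_alternating_sum_add_of_mul_one_add_eq {A : Type*} [CommRing A] {r b w : A}
    (h : r * (1 + w) = b * w) (J : ℕ) :
    r = ∑ j ∈ Icc 1 J, (-1 : ℤ) ^ (j - 1) • (b * w ^ j) + (-1 : ℤ) ^ J • (r * w ^ J) := by
  induction J with
  | zero => simp
  | succ J ih =>
    rw [sum_Icc_succ_top (by omega), Nat.add_sub_cancel]
    simp only [zsmul_eq_mul] at ih ⊢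
    push_cast at ih ⊢
    linear_combination ih + (-1 : A) ^ J * w ^ J * h

section WeightedLists

variable {α : Type*}

def weightedLists (w : α → ℕ) (P : α → Prop) (n : ℕ) : Set (List α) :=
  {l | (l.map w).sum = n ∧ ∀ a ∈ l, P a}

variable {w : α → ℕ} {P : α → Prop}

lemma weightedLists_zero (hw : ∀ a, P a → 0 < w a) : weightedLists w P 0 = {[]} := by
  ext l
  cases l with
  | nil => simp [weightedLists]
  | cons a l =>
    simp only [weightedLists, List.map_cons, List.sum_cons, Set.mem_ofPred_eq,
      Set.mem_singleton_iff, reduceCtorEq, iff_false, not_and]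
    intro hsum hP
    have := hw a (hP a List.mem_cons_self)
    omega

lemma weightedLists_succ (hw : ∀ a, P a → 0 < w a) (n : ℕ) :
    weightedLists w P (n + 1) = ⋃ q ∈ antidiagonal n, (fun x : α × List α => x.1 :: x.2) ''
      ({a | w a = q.1 + 1 ∧ P a} ×ˢ weightedLists w P q.2) := by
  ext l
  simp only [weightedLists, Set.mem_iUnion, Set.mem_image, Set.mem_prod, Set.mem_ofPred_eq,
    HasAntidiagonal.mem_antidiagonal, Prod.exists, exists_prop]
  constructor
  · rintro ⟨hsum, hP⟩
    cases l with
    | nil => simp at hsum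
    | cons a l =>
      have := hw a (hP a List.mem_cons_self)
      simp only [List.map_cons, List.sum_cons] at hsum
      exact ⟨w a - 1, (l.map w).sum, by omega, a, l,
        ⟨⟨by omega, hP a List.mem_cons_self⟩, rfl, fun b hb => hP b (List.mem_cons_of_mem a hb)⟩,
        rfl⟩
  · rintro ⟨i, j, hij, a, l, ⟨⟨hwa, hPa⟩, hsum, hPl⟩, rfl⟩
    refine ⟨?_, ?_⟩
    · simp only [List.map_cons, List.sum_cons]
      omega
    · simpa [hPa] using hPl

lemma pairwiseDisjoint_cons_image (w : α → ℕ) (P : α → Prop) (n : ℕ) :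
    (antidiagonal n : Set (ℕ × ℕ)).PairwiseDisjoint fun q => (fun x : α × List α => x.1 :: x.2) ''
      ({a | w a = q.1 + 1 ∧ P a} ×ˢ weightedLists w P q.2) := by
  rintro q - q' - hne
  refine Set.disjoint_left.mpr ?_
  rintro _ ⟨⟨a, l⟩, ⟨⟨hwa, -⟩, hl, -⟩, rfl⟩ ⟨⟨a', l'⟩, ⟨⟨hwa', -⟩, hl', -⟩, heq⟩
  obtain ⟨rfl, rfl⟩ := List.cons_eq_cons.mp heq
  dsimp only at hwa hwa' hl hl'
  exact hne (Prod.ext (by omega) (hl.symm.trans hl'))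

lemma finite_weightedLists (hw : ∀ a, P a → 0 < w a) {n : ℕ}
    (hfin : ∀ m ≤ n, {a | w a = m ∧ P a}.Finite) : (weightedLists w P n).Finite := by
  induction n using Nat.strong_induction_on with
  | _ n ih =>
    rcases n with _ | n
    · simp [weightedLists_zero hw]
    rw [weightedLists_succ hw]
    refine (antidiagonal n).finite_toSet.biUnion fun q hq =>
      ((hfin _ ?_).prod (ih _ ?_ fun m hm => hfin m ?_)).image _
    all_goals
      have := HasAntidiagonal.mem_antidiagonal.mp hq
      omega

lemma ncard_weightedLists_succ (hw : ∀ a, P a → 0 < w a) (hfin : ∀ m, {a | w a = m ∧ P a}.Finite)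
    (n : ℕ) : (weightedLists w P (n + 1)).ncard =
      ∑ q ∈ antidiagonal n, {a | w a = q.1 + 1 ∧ P a}.ncard * (weightedLists w P q.2).ncard := by
  rw [weightedLists_succ hw, ← finsum_mem_coe_finset, ← Finset.set_biUnion_coe,
    (antidiagonal n).finite_toSet.ncard_biUnion _ (pairwiseDisjoint_cons_image w P n)]
  · refine finsum_mem_congr rfl fun q _ => ?_
    rw [Set.ncard_image_of_injective _ fun x y h => Prod.ext (List.cons_eq_cons.mp h).1
      (List.cons_eq_cons.mp h).2, Set.ncard_prod]
  · exact fun q _ => ((hfin _).prod (finite_weightedLists hw fun m _ => hfin m)).image _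

end WeightedLists

section CountSeries

variable {α : Type*} {w : α → ℕ} {P : α → Prop}

noncomputable def countSeries (s : ℕ → Set α) : ℤ⟦X⟧ := mk fun n => ((s n).ncard : ℤ)

lemma coeff_countSeries (s : ℕ → Set α) (n : ℕ) : coeff n (countSeries s) = (s n).ncard :=
  coeff_mk _ _

theorem countSeries_weightedLists (hw : ∀ a, P a → 0 < w a)
    (hfin : ∀ m, {a | w a = m ∧ P a}.Finite) :
    countSeries (weightedLists w P) =
      1 + countSeries (fun n => {a | w a = n ∧ P a}) * countSeries (weightedLists w P) := by
  have hzero : {a | w a = 0 ∧ P a} = ∅ :=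
    Set.eq_empty_of_forall_notMem fun a ⟨h0, hPa⟩ => (hw a hPa).ne' h0
  ext n
  rw [map_add, coeff_mul, coeff_one, coeff_countSeries]
  rcases n with _ | n
  · simp [weightedLists_zero hw, coeff_countSeries, hzero]
  · rw [if_neg n.succ_ne_zero, zero_add, Nat.sum_antidiagonal_succ,
      ncard_weightedLists_succ hw hfin]
    simp [coeff_countSeries, hzero]

end CountSeries

lemma le_foldl_min_iff {α : Type*} [LinearOrder α] {k a : α} {l : List α} :
    k ≤ l.foldl min a ↔ k ≤ a ∧ ∀ x ∈ l, k ≤ x := by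
  induction l generalizing a with
  | nil => simp
  | cons x l ih =>
    rw [List.foldl_cons, ih, le_min_iff]
    simp [and_assoc]

namespace PlaneTree

lemma node_injective : Function.Injective node := fun _ _ h => by injection h

lemma size_node (cs : List PlaneTree) : (node cs).size = 1 + (cs.map size).sum := by
  rw [size, List.attach_map_val]

lemma size_pos (t : PlaneTree) : 0 < t.size := by
  cases t
  rw [size_node]
  omega

lemma setOf_size_succ (P : PlaneTree → Prop) (n : ℕ) :
    {t | t.size = n + 1 ∧ P t} = node '' {cs | (cs.map size).sum = n ∧ P (node cs)} := by
  ext ⟨cs⟩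
  simp only [Set.mem_ofPred_eq, Set.mem_image, node_injective.eq_iff, exists_eq_right, size_node]
  rw [add_comm 1, Nat.add_right_cancel_iff]

lemma finite_setOf_size (n : ℕ) : {t : PlaneTree | t.size = n}.Finite := by
  induction n using Nat.strong_induction_on with
  | _ n ih =>
    rcases n with _ | n
    · exact Set.finite_empty.subset fun t ht => (size_pos t).ne' ht
    · refine ((finite_weightedLists (n := n) (P := fun _ => True) (fun t _ => size_pos t)
        fun m hm => (ih m (by omega)).subset fun _ h => h.1).image node).subset ?_
      rintro ⟨cs⟩ h
      exact ⟨cs, ⟨by rw [Set.mem_ofPred_eq, size_node] at h; omega, fun _ _ => trivial⟩, rfl⟩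

lemma succ_le_protectionNumber_iff {k : ℕ} {cs : List PlaneTree} :
    k + 1 ≤ (node cs).protectionNumber ↔ cs ≠ [] ∧ ∀ c ∈ cs, k ≤ c.protectionNumber := by
  cases cs with
  | nil => simp [protectionNumber]
  | cons c cs =>
    rw [protectionNumber, List.attach_map_val, add_comm 1, Nat.add_le_add_iff_right,
      le_foldl_min_iff]
    simp

noncomputable def protectedSeries (k : ℕ) : ℤ⟦X⟧ :=
  countSeries fun n => {t : PlaneTree | t.size = n ∧ k ≤ t.protectionNumber}

noncomputable def forestSeries (k : ℕ) : ℤ⟦X⟧ :=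
  countSeries (weightedLists size fun t => k ≤ t.protectionNumber)

lemma coeff_protectedSeries (n k : ℕ) : coeff n (protectedSeries k) =
    ({t : PlaneTree | t.size = n ∧ k ≤ t.protectionNumber}.ncard : ℤ) :=
  coeff_countSeries _ n

lemma forestSeries_eq (k : ℕ) : forestSeries k = 1 + protectedSeries k * forestSeries k :=
  countSeries_weightedLists (fun t _ => size_pos t) fun m =>
    (finite_setOf_size m).subset fun _ h => h.1

lemma coeff_zero_protectedSeries (k : ℕ) : coeff 0 (protectedSeries k) = 0 := by
  have hempty : {t : PlaneTree | t.size = 0 ∧ k ≤ t.protectionNumber} = ∅ :=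
    Set.eq_empty_of_forall_notMem fun t ht => (size_pos t).ne' ht.1
  rw [coeff_protectedSeries, hempty, Set.ncard_empty, Nat.cast_zero]

lemma protectedSeries_zero : protectedSeries 0 = X * forestSeries 0 := by
  ext (_ | n)
  · rw [coeff_zero_protectedSeries, coeff_zero_X_mul]
  · rw [coeff_succ_X_mul, protectedSeries, forestSeries, coeff_countSeries, coeff_countSeries,
      setOf_size_succ, Set.ncard_image_of_injective _ node_injective]
    simp [weightedLists]

lemma protectedSeries_succ (k : ℕ) : protectedSeries (k + 1) = X * (forestSeries k - 1) := by
  ext (_ | n)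
  · rw [coeff_zero_protectedSeries, coeff_zero_X_mul]
  · have hlists : {cs | (cs.map size).sum = n ∧ k + 1 ≤ (node cs).protectionNumber} =
        weightedLists size (fun t => k ≤ t.protectionNumber) n \ {[]} := by
      ext cs
      simp only [succ_le_protectionNumber_iff, weightedLists, Set.mem_sdiff, Set.mem_ofPred_eq,
        Set.mem_singleton_iff]
      tauto
    rw [coeff_succ_X_mul, protectedSeries, forestSeries, map_sub, coeff_countSeries,
      coeff_countSeries, coeff_one, setOf_size_succ, Set.ncard_image_of_injective _ node_injective,
      hlists]
    rcases n with _ | n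
    · rw [weightedLists_zero fun t _ => size_pos t, Set.sdiff_self]
      simp
    · rw [Set.sdiff_singleton_eq_self fun h => by simp [weightedLists] at h, if_neg n.succ_ne_zero,
        sub_zero]

lemma X_dvd_protectedSeries (k : ℕ) : X ∣ protectedSeries k :=
  X_dvd_iff.mpr <| by rw [← coeff_zero_eq_constantCoeff_apply, coeff_zero_protectedSeries]

lemma protectedSeries_zero_eq_X_add_sq : protectedSeries 0 = X + protectedSeries 0 ^ 2 := by
  linear_combination (1 - protectedSeries 0) * protectedSeries_zero + X * forestSeries_eq 0

lemma protectedSeries_succ_mul_one_sub (k : ℕ) :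
    protectedSeries (k + 1) * (1 - protectedSeries k) = X * protectedSeries k := by
  linear_combination (1 - protectedSeries k) * protectedSeries_succ k + X * forestSeries_eq k

lemma protectedSeries_mul_one_sub_sq_add (k : ℕ) :
    protectedSeries k * ((1 - protectedSeries 0) ^ 2 + protectedSeries 0 * X ^ k) =
      (1 - X) * protectedSeries 0 * X ^ k :=
  mul_one_sub_sq_add_mul_pow_eq (by linear_combination -protectedSeries_zero_eq_X_add_sq) rfl
    protectedSeries_succ_mul_one_sub k

/-- As `forestSeries 0 = 1 / (1 - C)` for `C = protectedSeries 0`, this is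
`C x ^ k / (1 - C) ^ 2`. -/
noncomputable def ratioSeries (k : ℕ) : ℤ⟦X⟧ := protectedSeries 0 * X ^ k * forestSeries 0 ^ 2

lemma protectedSeries_mul_one_add_ratioSeries (k : ℕ) :
    protectedSeries k * (1 + ratioSeries k) = (1 - X) * ratioSeries k := by
  have hinv : (1 - protectedSeries 0) * forestSeries 0 = 1 := by
    linear_combination forestSeries_eq 0
  rw [ratioSeries]
  linear_combination forestSeries 0 ^ 2 * protectedSeries_mul_one_sub_sq_add k -
    protectedSeries k * (1 + (1 - protectedSeries 0) * forestSeries 0) * hinv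

lemma X_sq_mul_ratioSeries (k : ℕ) : X ^ 2 * ratioSeries k = protectedSeries 0 ^ 3 * X ^ k := by
  rw [ratioSeries, protectedSeries_zero]
  ring

lemma X_dvd_ratioSeries (k : ℕ) : X ∣ ratioSeries k :=
  ((X_dvd_protectedSeries 0).mul_right _).mul_right _

end PlaneTree

theorem protected_tree_count_explicit_general (n k : ℕ) :
    (Set.ncard {t : PlaneTree | t.size = n ∧ k ≤ t.protectionNumber} : ℤ) =
      ∑ j ∈ Finset.Icc 1 n, (-1 : ℤ) ^ (j - 1) *
        (intChoose (2 * n - 3 - (2 * k - 1) * j) (n - (k + 1) * j) -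
         intChoose (2 * n - 3 - (2 * k - 1) * j) (n - 3 - (k + 1) * j)) := by
  have hexpand := eq_alternating_sum_add_of_mul_one_add_eq
    (PlaneTree.protectedSeries_mul_one_add_ratioSeries k) n
  have hremainder : coeff n (PlaneTree.protectedSeries k * PlaneTree.ratioSeries k ^ n) = 0 := by
    refine X_pow_dvd_iff.mp ?_ n n.lt_succ_self
    rw [pow_succ']
    exact mul_dvd_mul (PlaneTree.X_dvd_protectedSeries k)
      (pow_dvd_pow_of_dvd (PlaneTree.X_dvd_ratioSeries k) n)
  rw [← PlaneTree.coeff_protectedSeries, hexpand, map_add, map_zsmul, hremainder, smul_zero,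
    add_zero, map_sum]
  refine sum_congr rfl fun j hj => ?_
  rw [map_zsmul, smul_eq_mul, coeff_one_sub_X_mul_pow_of_X_sq_mul
    PlaneTree.protectedSeries_zero_eq_X_add_sq (PlaneTree.X_dvd_protectedSeries 0)
    (PlaneTree.X_sq_mul_ratioSeries k) n (mem_Icc.mp hj).1]

/-- The number of rooted plane trees with `n` vertices and protection number at least `k`
equals `∑_{j≥1} (-1)^{j-1} [binom(2n-3-(2k-1)j, n-(k+1)j) - binom(2n-3-(2k-1)j, n-3-(k+1)j)]`
(the terms vanish for `j > n`). -/
theorem protected_tree_count_explicit (n k : ℕ) (hn : 1 ≤ n) (hk : 1 ≤ k) :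
    (Set.ncard {t : PlaneTree | t.size = n ∧ k ≤ t.protectionNumber} : ℤ) =
      ∑ j ∈ Finset.Icc 1 n, (-1 : ℤ) ^ (j - 1) *
        (intChoose (2 * n - 3 - (2 * k - 1) * j) (n - (k + 1) * j) -
         intChoose (2 * n - 3 - (2 * k - 1) * j) (n - 3 - (k + 1) * j)) :=
  protected_tree_count_explicit_general n k
end

section
/- The Mellin transform of F(x) = Σ_{k≥1} e^{-(2k-1)x}/(1+e^{-(2k-1)x})², for x > 0, equals Γ(s)·ζ(s-1)·ζ(s)·(1-2^{2-s})·(1-2^{-s}) for real s > 2, i.e., ∫₀^∞ F(x) x^{s-1} dx = Γ(s)ζ(s-1)ζ(s)(1-2^{2-s})(1-2^{-s}). -/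
/-!
Expanding `e^{-y}/(1+e^{-y})^2 = Σ_{j≥0} (-1)^j (j+1) e^{-(j+1)y}` turns `F` into the absolutely
convergent double series `Σ_{k,j} (-1)^j (j+1) e^{-(2k+1)(j+1)x}`. Its Mellin transform can be
taken termwise, giving `Γ(s) Σ_k (2k+1)^{-s} Σ_j (-1)^j (j+1)^{1-s}`: the Dirichlet series over odd
integers is `(1-2^{-s}) ζ(s)`, and the alternating one is `(1-2^{2-s}) ζ(s-1)`.
-/

open Complex

lemma hasSum_nat_add_one_cpow_neg {c : ℂ} (hc : 1 < c.re) :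
    HasSum (fun n : ℕ => ((n : ℂ) + 1) ^ (-c)) (riemannZeta c) := by
  have hsum : Summable (fun n : ℕ => 1 / ((n : ℂ) + 1) ^ c) := by
    simpa using (summable_nat_add_iff 1).mpr (summable_one_div_nat_cpow.mpr hc)
  simpa [zeta_eq_tsum_one_div_nat_add_one_cpow hc, cpow_neg] using hsum.hasSum

lemma hasSum_two_mul_add_two_cpow_neg {c : ℂ} (hc : 1 < c.re) :
    HasSum (fun m : ℕ => (2 * (m : ℂ) + 2) ^ (-c)) (2 ^ (-c) * riemannZeta c) := by
  refine ((hasSum_nat_add_one_cpow_neg hc).mul_left (2 ^ (-c))).congr_fun fun m => ?_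
  have h := natCast_mul_natCast_cpow 2 (m + 1) (-c)
  push_cast at h
  rw [← h]
  ring_nf

lemma hasSum_two_mul_add_one_cpow_neg {c : ℂ} (hc : 1 < c.re) :
    HasSum (fun m : ℕ => (2 * (m : ℂ) + 1) ^ (-c)) ((1 - 2 ^ (-c)) * riemannZeta c) := by
  have hζ := hasSum_nat_add_one_cpow_neg hc
  have hodd : Summable (fun m : ℕ => (2 * (m : ℂ) + 1) ^ (-c)) :=
    (hζ.summable.comp_injective (mul_right_injective₀ two_ne_zero)).congr fun m => by simp
  have hsplit : HasSum (fun n : ℕ => ((n : ℂ) + 1) ^ (-c))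
      (∑' m : ℕ, (2 * (m : ℂ) + 1) ^ (-c) + 2 ^ (-c) * riemannZeta c) :=
    HasSum.even_add_odd (by simpa using hodd.hasSum)
      (by simpa [add_assoc, one_add_one_eq_two] using hasSum_two_mul_add_two_cpow_neg hc)
  convert hodd.hasSum using 1
  linear_combination hζ.unique hsplit

lemma hasSum_neg_one_pow_mul_nat_add_one_cpow_neg {c : ℂ} (hc : 1 < c.re) :
    HasSum (fun n : ℕ => (-1) ^ n * ((n : ℂ) + 1) ^ (-c))
      ((1 - 2 ^ (1 - c)) * riemannZeta c) := by
  have h := HasSum.even_add_odd (f := fun n : ℕ => (-1) ^ n * ((n : ℂ) + 1) ^ (-c))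
    (by simpa [pow_mul] using hasSum_two_mul_add_one_cpow_neg hc)
    (by simpa [pow_succ, pow_mul, add_assoc, one_add_one_eq_two]
      using (hasSum_two_mul_add_two_cpow_neg hc).neg)
  convert h using 1
  rw [sub_eq_add_neg (1 : ℂ) c, cpow_add _ _ two_ne_zero, cpow_one]
  ring

lemma hasSum_neg_one_pow_mul_succ_mul_pow_succ {𝕜 : Type*} [NormedField 𝕜] [CompleteSpace 𝕜]
    {q : 𝕜} (hq : ‖q‖ < 1) :
    HasSum (fun j : ℕ => (-1) ^ j * ((j : 𝕜) + 1) * q ^ (j + 1)) (q / (1 + q) ^ 2) := by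
  have h := ((hasSum_nat_add_iff' 1).mpr
    (hasSum_coe_mul_geometric_of_norm_lt_one (r := -q) (by rwa [norm_neg]))).neg
  simp only [Finset.sum_range_one, Nat.cast_zero, zero_mul, sub_zero, sub_neg_eq_add,
    neg_div, neg_neg] at h
  refine h.congr_fun fun j => ?_
  rw [neg_pow q, pow_succ (-1 : 𝕜)]
  push_cast
  ring

lemma summable_succ_mul_abs_pow_odd_mul_succ {r : ℝ} (hr : |r| < 1) :
    Summable (fun i : ℕ × ℕ => ((i.2 : ℝ) + 1) * |r| ^ ((2 * i.1 + 1) * (i.2 + 1))) := by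
  have hr₀ : 0 ≤ |r| := abs_nonneg r
  have hk : Summable (fun k : ℕ => |r| ^ (2 * k)) := by
    simpa only [pow_mul] using
      summable_geometric_of_lt_one (sq_nonneg _) (by nlinarith : |r| ^ 2 < 1)
  have hj : Summable (fun j : ℕ => ((j : ℝ) + 1) * |r| ^ (j + 1)) := by
    have h := hasSum_coe_mul_geometric_of_norm_lt_one (r := |r|)
      (by rwa [Real.norm_eq_abs, abs_abs])
    refine ((summable_nat_add_iff 1).mpr h.summable).congr fun j => ?_
    push_cast
    ring
  refine (hk.mul_of_nonneg hj (fun _ => by positivity) (fun _ => by positivity)).of_nonneg_of_le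
    (fun _ => by positivity) fun ⟨k, j⟩ => ?_
  calc ((j : ℝ) + 1) * |r| ^ ((2 * k + 1) * (j + 1))
      ≤ ((j : ℝ) + 1) * |r| ^ (2 * k + (j + 1)) := by
        refine mul_le_mul_of_nonneg_left (pow_le_pow_of_le_one hr₀ hr.le ?_) (by positivity)
        nlinarith
    _ = |r| ^ (2 * k) * (((j : ℝ) + 1) * |r| ^ (j + 1)) := by ring

lemma hasSum_neg_one_pow_mul_succ_mul_pow_odd_mul_succ {r : ℝ} (hr : |r| < 1) :
    HasSum (fun i : ℕ × ℕ => (-1) ^ i.2 * ((i.2 : ℝ) + 1) * r ^ ((2 * i.1 + 1) * (i.2 + 1)))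
      (∑' k : ℕ, r ^ (2 * k + 1) / (1 + r ^ (2 * k + 1)) ^ 2) := by
  have hsum : Summable
      (fun i : ℕ × ℕ => (-1) ^ i.2 * ((i.2 : ℝ) + 1) * r ^ ((2 * i.1 + 1) * (i.2 + 1))) := by
    refine Summable.of_norm ((summable_succ_mul_abs_pow_odd_mul_succ hr).congr fun i => ?_)
    simp [abs_of_nonneg (by positivity : (0 : ℝ) ≤ i.2 + 1)]
  have hfiber (k : ℕ) :
      HasSum (fun j : ℕ => (-1) ^ j * ((j : ℝ) + 1) * r ^ ((2 * k + 1) * (j + 1)))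
        (r ^ (2 * k + 1) / (1 + r ^ (2 * k + 1)) ^ 2) := by
    simpa only [pow_mul] using hasSum_neg_one_pow_mul_succ_mul_pow_succ
      (by simpa using pow_lt_one₀ (abs_nonneg r) hr (2 * k).succ_ne_zero)
  rw [(hsum.hasSum.prod_fiberwise hfiber).tsum_eq]
  exact hsum.hasSum

noncomputable def oddLambertSeries (x : ℝ) : ℝ :=
  ∑' k : ℕ, Real.exp (-(2 * (k : ℝ) + 1) * x) / (1 + Real.exp (-(2 * (k : ℝ) + 1) * x)) ^ 2

lemma hasSum_oddLambertSeries {t : ℝ} (ht : 0 < t) :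
    HasSum (fun i : ℕ × ℕ => (-1) ^ i.2 * ((i.2 : ℝ) + 1) *
      Real.exp (-(((2 * i.1 + 1) * (i.2 + 1) : ℕ) : ℝ) * t)) (oddLambertSeries t) := by
  have hr : |Real.exp (-t)| < 1 := by
    rw [abs_of_pos (Real.exp_pos _), Real.exp_lt_one_iff]
    linarith
  have hexp (n : ℕ) : Real.exp (-(n : ℝ) * t) = Real.exp (-t) ^ n := by
    rw [← Real.exp_nat_mul, neg_mul_comm]
  have hodd (k : ℕ) : Real.exp (-(2 * (k : ℝ) + 1) * t) = Real.exp (-t) ^ (2 * k + 1) := by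
    rw [← hexp]
    push_cast
    ring_nf
  convert hasSum_neg_one_pow_mul_succ_mul_pow_odd_mul_succ hr using 1
  · simp only [hexp]
  · simp only [oddLambertSeries, hodd]

lemma div_odd_mul_succ_cpow (s : ℂ) (k j : ℕ) :
    ((j : ℂ) + 1) / (((2 * k + 1) * (j + 1) : ℕ) : ℂ) ^ s =
      (2 * (k : ℂ) + 1) ^ (-s) * ((j : ℂ) + 1) ^ (-(s - 1)) := by
  have hj : (j : ℂ) + 1 ≠ 0 := by exact_mod_cast j.succ_ne_zero
  rw [Nat.cast_mul, natCast_mul_natCast_cpow, neg_sub, cpow_sub _ _ hj, cpow_one, cpow_neg]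
  push_cast
  field_simp

theorem mellin_oddLambertSeries {s : ℂ} (hs : 2 < s.re) :
    mellin (fun x => (oddLambertSeries x : ℂ)) s =
      Gamma s * riemannZeta (s - 1) * riemannZeta s * (1 - 2 ^ (2 - s)) * (1 - 2 ^ (-s)) := by
  set a : ℕ × ℕ → ℂ := fun i => (-1) ^ i.2 * ((i.2 : ℂ) + 1)
  set p : ℕ × ℕ → ℝ := fun i => ((2 * i.1 + 1) * (i.2 + 1) : ℕ)
  set u : ℕ → ℂ := fun k => (2 * (k : ℂ) + 1) ^ (-s)
  set v : ℕ → ℂ := fun j => (-1) ^ j * ((j : ℂ) + 1) ^ (-(s - 1))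
  have hu : HasSum u ((1 - 2 ^ (-s)) * riemannZeta s) :=
    hasSum_two_mul_add_one_cpow_neg (by linarith)
  have hv : HasSum v ((1 - 2 ^ (1 - (s - 1))) * riemannZeta (s - 1)) :=
    hasSum_neg_one_pow_mul_nat_add_one_cpow_neg (by rw [sub_re, one_re]; linarith)
  have hterm (i : ℕ × ℕ) : a i / (p i : ℂ) ^ s = u i.1 * v i.2 := by
    simp only [a, p, u, v, ofReal_natCast, mul_div_assoc, div_odd_mul_succ_cpow]
    ring
  have hnorm : Summable fun i : ℕ × ℕ => ‖u i.1 * v i.2‖ :=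
    (summable_norm_iff.mpr hu.summable).mul_norm (summable_norm_iff.mpr hv.summable)
  have hmellin := hasSum_mellin (a := a) (p := p) (F := fun x => (oddLambertSeries x : ℂ))
    (fun i => Or.inr (by positivity)) (by linarith)
    (fun t ht => by simpa [a, p] using hasSum_ofReal.mpr (hasSum_oddLambertSeries ht))
    (hnorm.congr fun i => by
      rw [← hterm, norm_div, norm_cpow_eq_rpow_re_of_pos (by positivity)])
  have hdirichlet := (hu.mul hv hnorm.of_norm).mul_left (Gamma s)
  rw [(hmellin.congr_fun fun i => by rw [mul_div_assoc, hterm]).unique hdirichlet,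
    sub_sub_eq_add_sub, one_add_one_eq_two]
  ring

/-- The Mellin transform of `F(x) = Σ_{k≥1} e^{-(2k-1)x}/(1+e^{-(2k-1)x})²` is
`Γ(s)·ζ(s-1)·ζ(s)·(1-2^{2-s})·(1-2^{-s})` for real `s > 2`. -/
theorem mellin_F (s : ℝ) (hs : 2 < s) :
    ((∫ x in Set.Ioi (0 : ℝ),
        (∑' k : ℕ, Real.exp (-(2 * (k : ℝ) + 1) * x) /
          (1 + Real.exp (-(2 * (k : ℝ) + 1) * x)) ^ 2) * x ^ (s - 1) : ℝ) : ℂ) =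
      Complex.Gamma s * riemannZeta ((s : ℂ) - 1) * riemannZeta s *
        (1 - (2 : ℂ) ^ ((2 : ℂ) - s)) * (1 - (2 : ℂ) ^ (-(s : ℂ))) := by
  rw [← mellin_oddLambertSeries (by rwa [ofReal_re]), mellin, ← integral_complex_ofReal]
  refine MeasureTheory.setIntegral_congr_fun measurableSet_Ioi fun x (hx : 0 < x) => ?_
  rw [smul_eq_mul, ofReal_mul, ofReal_cpow hx.le, ofReal_sub, ofReal_one, mul_comm]
  rfl
end

section
/- The Mellin transform of G(x) = Σ_{k,j≥1} (-1)^{j-1}(2k-1)e^{-j(2k-1)x}, for x > 0, equals Γ(s)·ζ(s)·ζ(s-1)·(1-2^{1-s})² for real s > 2. -/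
/-!
Writing `a(k, j) = (-1)^j (2k+1)` and `p(k, j) = (j+1)(2k+1)`, the function is the absolutely
convergent exponential sum `G(x) = ∑ a(k, j) e^{-p(k, j) x}`, so its Mellin transform is computed
termwise: `Γ(s) ∑ a(k, j) / p(k, j)^s`. That Dirichlet series factors as
`(∑_k (2k+1)^{1-s}) · (∑_j (-1)^j (j+1)^{-s})`, the odd part of `ζ(s-1)` times the alternating
zeta function, i.e. `(1 - 2^{1-s}) ζ(s-1) · (1 - 2^{1-s}) ζ(s)`.
-/

open Complex MeasureTheory Set

lemma hasSum_one_div_nat_add_one_cpow {s : ℂ} (hs : 1 < s.re) :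
    HasSum (fun n : ℕ => 1 / ((n : ℂ) + 1) ^ s) (riemannZeta s) := by
  rw [zeta_eq_tsum_one_div_nat_add_one_cpow hs]
  exact (((summable_nat_add_iff 1).2 (summable_one_div_nat_cpow.2 hs)).congr fun n => by
    push_cast; rfl).hasSum

lemma hasSum_one_div_two_mul_add_two_cpow {s : ℂ} (hs : 1 < s.re) :
    HasSum (fun k : ℕ => 1 / (2 * (k : ℂ) + 2) ^ s) (2 ^ (-s) * riemannZeta s) := by
  refine ((hasSum_one_div_nat_add_one_cpow hs).mul_left (2 ^ (-s))).congr_fun fun k => ?_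
  have hsplit : 2 * (k : ℂ) + 2 = ((2 : ℝ) : ℂ) * (((k + 1 : ℝ)) : ℂ) := by push_cast; ring
  rw [hsplit, mul_cpow_ofReal_nonneg zero_le_two (by positivity), cpow_neg]
  push_cast
  rw [one_div, mul_inv, one_div]

lemma hasSum_one_div_two_mul_add_one_cpow {s : ℂ} (hs : 1 < s.re) :
    HasSum (fun k : ℕ => 1 / (2 * (k : ℂ) + 1) ^ s) ((1 - 2 ^ (-s)) * riemannZeta s) := by
  set f : ℕ → ℂ := fun n => 1 / ((n : ℂ) + 1) ^ s
  have hζ : HasSum f (riemannZeta s) := hasSum_one_div_nat_add_one_cpow hs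
  have heven : HasSum (fun k => f (2 * k + 1)) (2 ^ (-s) * riemannZeta s) :=
    (hasSum_one_div_two_mul_add_two_cpow hs).congr_fun fun k => by
      simp only [f]; push_cast; ring_nf
  obtain ⟨a, hodd⟩ : Summable fun k => f (2 * k) :=
    hζ.summable.comp_injective (strictMono_id.const_mul two_pos).injective
  have ha : a = (1 - 2 ^ (-s)) * riemannZeta s := by
    have := hζ.unique (hodd.even_add_odd heven)
    linear_combination -this
  subst ha
  exact hodd.congr_fun fun k => by simp only [f]; push_cast; rfl

lemma hasSum_neg_one_pow_div_nat_add_one_cpow {s : ℂ} (hs : 1 < s.re) :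
    HasSum (fun j : ℕ => (-1) ^ j / ((j : ℂ) + 1) ^ s) ((1 - 2 ^ (1 - s)) * riemannZeta s) := by
  have h2 : (2 : ℂ) ^ (1 - s) = 2 * 2 ^ (-s) := by
    rw [sub_eq_add_neg, cpow_add _ _ two_ne_zero, cpow_one]
  have h := HasSum.even_add_odd (f := fun j : ℕ => (-1) ^ j / ((j : ℂ) + 1) ^ s)
    ((hasSum_one_div_two_mul_add_one_cpow hs).congr_fun fun k => by
      simp only [pow_mul, neg_one_sq, one_pow]; push_cast; rfl)
    ((hasSum_one_div_two_mul_add_two_cpow hs).neg.congr_fun fun k => by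
      rw [pow_succ, pow_mul, neg_one_sq, one_pow]; push_cast
      rw [add_assoc, one_add_one_eq_two, one_mul, neg_div])
  convert h using 1
  rw [h2]; ring

lemma HasSum.mul_of_finiteDimensional {ι ι' R : Type*} [NormedRing R] [NormedSpace ℝ R]
    [FiniteDimensional ℝ R] {f : ι → R} {g : ι' → R} {a b : R} (hf : HasSum f a)
    (hg : HasSum g b) : HasSum (fun i : ι × ι' => f i.1 * g i.2) (a * b) :=
  haveI := FiniteDimensional.complete ℝ R
  hf.mul hg (summable_mul_of_summable_norm (summable_norm_iff.2 hf.summable)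
    (summable_norm_iff.2 hg.summable))

lemma summable_odd_mul_exp_neg_mul {t : ℝ} (ht : 0 < t) :
    Summable fun i : ℕ × ℕ =>
      (2 * (i.1 : ℝ) + 1) * Real.exp (-((i.2 : ℝ) + 1) * (2 * (i.1 : ℝ) + 1) * t) := by
  have hodd : Summable fun k : ℕ => (2 * (k : ℝ) + 1) * Real.exp (-t * (2 * (k : ℝ) + 1)) := by
    have := (Real.summable_pow_mul_exp_neg_nat_mul 1 ht).comp_injective
      (i := fun k : ℕ => 2 * k + 1) (strictMono_id.const_mul two_pos |>.add_const 1).injective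
    exact this.congr fun k => by simp only [Function.comp_apply, pow_one]; push_cast; ring_nf
  have hgeom : Summable fun j : ℕ => Real.exp (j * -t) :=
    Real.summable_exp_nat_mul_iff.2 (neg_lt_zero.2 ht)
  refine (hodd.mul_of_nonneg hgeom (fun _ => by positivity) fun _ => by positivity).of_nonneg_of_le
    (fun _ => by positivity) fun ⟨k, j⟩ => ?_
  -- `(j+1)(2k+1) ≥ (2k+1) + j`
  dsimp only
  rw [mul_assoc _ (Real.exp _), ← Real.exp_add]
  gcongr
  nlinarith [mul_nonneg (mul_nonneg (Nat.cast_nonneg j) (Nat.cast_nonneg k)) ht.le,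
    mul_nonneg (Nat.cast_nonneg k) ht.le]

lemma hasSum_neg_one_pow_mul_odd_mul_exp_neg_mul {t : ℝ} (ht : 0 < t) :
    HasSum (fun i : ℕ × ℕ => (-1 : ℝ) ^ i.2 * (2 * (i.1 : ℝ) + 1) *
        Real.exp (-((i.2 : ℝ) + 1) * (2 * (i.1 : ℝ) + 1) * t))
      (∑' k : ℕ, ∑' j : ℕ, (-1 : ℝ) ^ j * (2 * (k : ℝ) + 1) *
        Real.exp (-((j : ℝ) + 1) * (2 * (k : ℝ) + 1) * t)) := by
  have h : Summable fun i : ℕ × ℕ => (-1 : ℝ) ^ i.2 * (2 * (i.1 : ℝ) + 1) *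
      Real.exp (-((i.2 : ℝ) + 1) * (2 * (i.1 : ℝ) + 1) * t) :=
    Summable.of_norm <| (summable_odd_mul_exp_neg_mul ht).congr fun i => by
      simp [abs_of_pos (by positivity : (0 : ℝ) < 2 * i.1 + 1)]
  exact h.tsum_prod' (fun k => h.prod_factor k) ▸ h.hasSum

lemma ofReal_setIntegral_mul_rpow_eq_mellin (f : ℝ → ℝ) (s : ℝ) :
    ((∫ x in Ioi (0 : ℝ), f x * x ^ (s - 1) : ℝ) : ℂ) = mellin (fun x => (f x : ℂ)) s := by
  rw [mellin, ← integral_complex_ofReal]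
  refine setIntegral_congr_fun measurableSet_Ioi fun x (hx : 0 < x) => ?_
  rw [smul_eq_mul, mul_comm, ofReal_mul, ofReal_cpow hx.le]
  push_cast; rfl

lemma neg_one_pow_mul_odd_div_cpow_eq (k j : ℕ) (s : ℂ) :
    (-1) ^ j * (2 * (k : ℂ) + 1) / ((((j : ℝ) + 1) * (2 * (k : ℝ) + 1) : ℝ) : ℂ) ^ s =
      1 / (2 * (k : ℂ) + 1) ^ (s - 1) * ((-1) ^ j / ((j : ℂ) + 1) ^ s) := by
  have hk : (2 * (k : ℂ) + 1) ≠ 0 := by exact_mod_cast (by positivity : (2 * (k : ℝ) + 1) ≠ 0)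
  rw [ofReal_mul, mul_cpow_ofReal_nonneg (by positivity) (by positivity), cpow_sub _ _ hk, cpow_one]
  push_cast
  field_simp

lemma hasSum_neg_one_pow_mul_odd_div_cpow {s : ℂ} (hs : 2 < s.re) :
    HasSum (fun i : ℕ × ℕ =>
        (-1) ^ i.2 * (2 * (i.1 : ℂ) + 1) / ((((i.2 : ℝ) + 1) * (2 * (i.1 : ℝ) + 1) : ℝ) : ℂ) ^ s)
      ((1 - 2 ^ (1 - s)) ^ 2 * riemannZeta s * riemannZeta (s - 1)) := by
  have hodd := hasSum_one_div_two_mul_add_one_cpow (s := s - 1) (by simp; linarith)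
  have halt := hasSum_neg_one_pow_div_nat_add_one_cpow (s := s) (by linarith)
  rw [neg_sub] at hodd
  rw [show (1 - 2 ^ (1 - s)) ^ 2 * riemannZeta s * riemannZeta (s - 1) =
    (1 - 2 ^ (1 - s)) * riemannZeta (s - 1) * ((1 - 2 ^ (1 - s)) * riemannZeta s) by ring]
  exact (hodd.mul_of_finiteDimensional halt).congr_fun fun i =>
    neg_one_pow_mul_odd_div_cpow_eq i.1 i.2 s

/-- The Mellin transform of `G(x) = Σ_{k,j≥1} (-1)^{j-1}(2k-1)e^{-j(2k-1)x}` is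
`Γ(s)·ζ(s)·ζ(s-1)·(1-2^{1-s})²` for real `s > 2`. -/
theorem mellin_G (s : ℝ) (hs : 2 < s) :
    ((∫ x in Set.Ioi (0 : ℝ),
        (∑' k : ℕ, ∑' j : ℕ, (-1 : ℝ) ^ j * (2 * (k : ℝ) + 1) *
          Real.exp (-((j : ℝ) + 1) * (2 * (k : ℝ) + 1) * x)) * x ^ (s - 1) : ℝ) : ℂ) =
      Complex.Gamma s * riemannZeta s * riemannZeta ((s : ℂ) - 1) *
        (1 - (2 : ℂ) ^ ((1 : ℂ) - s)) ^ 2 := by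
  have hD := hasSum_neg_one_pow_mul_odd_div_cpow (s := s) (by simpa using hs)
  have hM := hasSum_mellin (a := fun i : ℕ × ℕ => (-1) ^ i.2 * (2 * (i.1 : ℂ) + 1))
    (p := fun i => ((i.2 : ℝ) + 1) * (2 * (i.1 : ℝ) + 1)) (s := s)
    (fun i => Or.inr (by positivity)) (by simp; linarith)
    (fun t ht => (hasSum_ofReal.2 (hasSum_neg_one_pow_mul_odd_mul_exp_neg_mul ht)).congr_fun
      fun i => by push_cast; ring_nf)
    ((summable_norm_iff.2 hD.summable).congr fun i => by
      rw [norm_div, norm_cpow_eq_rpow_re_of_pos (by positivity)])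
  rw [ofReal_setIntegral_mul_rpow_eq_mellin,
    hM.unique ((hD.mul_left (Gamma s)).congr_fun fun i => mul_div_assoc ..)]
  ring
end

section
/- Under the substitution z = u/(1+u)², the generating function R_k(z) = (1-z)z^{k-2}R₀(z)³/(1+z^{k-2}R₀(z)³) with R₀(z) = (1-√(1-4z))/2 becomes R_k(u/(1+u)²) = ((1-u³)/((1-u)(1+u)²)) · (u^{k+1}/(1+u)^{2k-1}) / (1 + u^{k+1}/(1+u)^{2k-1}). -/
/-!
The substitution `z = u/(1+u)²` makes the discriminant a square, `1 - 4z = ((1-u)/(1+u))²`,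
so for `-1 < u < 1` the Catalan root is `R₀(z) = u/(1+u)`. Then `z^{k-2} R₀(z)³` collapses to
`u^{k+1}/(1+u)^{2k-1}` and `1 - z = (1+u+u²)/(1+u)²`, which gives the claimed form.
-/

section Field

variable {K : Type*} [Field K]

theorem one_sub_div_one_add_sq {u : K} (hu₁ : u ≠ 1) (hu : 1 + u ≠ 0) :
    1 - u / (1 + u) ^ 2 = (1 - u ^ 3) / ((1 - u) * (1 + u) ^ 2) := by
  have : 1 - u ≠ 0 := sub_ne_zero.mpr hu₁.symm
  field_simp
  ring

theorem div_one_add_sq_zpow_mul_div_one_add_cube {k : ℕ} (hk : 1 ≤ k) {u : K} (hu : 1 + u ≠ 0) :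
    (u / (1 + u) ^ 2) ^ ((k : ℤ) - 2) * (u / (1 + u)) ^ 3 =
      u ^ (k + 1) / (1 + u) ^ (2 * k - 1) := by
  obtain ⟨m, rfl⟩ := Nat.exists_eq_add_of_le' hk
  rcases eq_or_ne u 0 with rfl | hu₀
  · simp
  have hexp : ((m + 1 : ℕ) : ℤ) - 2 = (m : ℤ) - 1 := by push_cast; ring
  rw [hexp, zpow_sub_one₀ (by positivity), zpow_natCast, show 2 * (m + 1) - 1 = 2 * m + 1 by omega,
    div_pow, ← pow_mul]
  field_simp
  ring

end Field

theorem Real.sqrt_one_sub_four_mul_div_one_add_sq {u : ℝ} (hu₁ : -1 < u) (hu₂ : u ≤ 1) :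
    √(1 - 4 * (u / (1 + u) ^ 2)) = (1 - u) / (1 + u) := by
  have hpos : 0 < 1 + u := by linarith
  have hsq : 1 - 4 * (u / (1 + u) ^ 2) = ((1 - u) / (1 + u)) ^ 2 := by
    field_simp
    ring
  rw [hsq, Real.sqrt_sq (div_nonneg (by linarith) hpos.le)]

theorem Real.one_sub_sqrt_one_sub_four_mul_div_one_add_sq {u : ℝ} (hu₁ : -1 < u) (hu₂ : u ≤ 1) :
    (1 - √(1 - 4 * (u / (1 + u) ^ 2))) / 2 = u / (1 + u) := by
  have : 1 + u ≠ 0 := by linarith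
  rw [Real.sqrt_one_sub_four_mul_div_one_add_sq hu₁ hu₂]
  field_simp
  ring

theorem substitution_Rk_general (k : ℕ) (hk : 1 ≤ k) (u : ℝ) (hu : |u| < 1) :
    (1 - u / (1 + u) ^ 2) * (u / (1 + u) ^ 2) ^ ((k : ℤ) - 2) *
        ((1 - Real.sqrt (1 - 4 * (u / (1 + u) ^ 2))) / 2) ^ 3 /
      (1 + (u / (1 + u) ^ 2) ^ ((k : ℤ) - 2) *
        ((1 - Real.sqrt (1 - 4 * (u / (1 + u) ^ 2))) / 2) ^ 3) =
      (1 - u ^ 3) / ((1 - u) * (1 + u) ^ 2) *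
        (u ^ (k + 1) / (1 + u) ^ (2 * k - 1)) /
        (1 + u ^ (k + 1) / (1 + u) ^ (2 * k - 1)) := by
  obtain ⟨hu₁, hu₂⟩ := abs_lt.mp hu
  have hne : 1 + u ≠ 0 := by linarith
  rw [Real.one_sub_sqrt_one_sub_four_mul_div_one_add_sq hu₁ hu₂.le, mul_assoc,
    div_one_add_sq_zpow_mul_div_one_add_cube hk hne, one_sub_div_one_add_sq hu₂.ne hne,
    mul_div_assoc]

/-- Under the substitution `z = u/(1+u)²`, the closed form
`R_k(z) = (1-z)z^{k-2}R₀(z)³/(1+z^{k-2}R₀(z)³)` with `R₀(z) = (1-√(1-4z))/2` becomes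
`((1-u³)/((1-u)(1+u)²)) · (u^{k+1}/(1+u)^{2k-1}) / (1 + u^{k+1}/(1+u)^{2k-1})`. -/
theorem substitution_Rk (k : ℕ) (hk : 1 ≤ k) (u : ℝ) (hu0 : 0 < |u|) (hu : |u| < 1) :
    (1 - u / (1 + u) ^ 2) * (u / (1 + u) ^ 2) ^ ((k : ℤ) - 2) *
        ((1 - Real.sqrt (1 - 4 * (u / (1 + u) ^ 2))) / 2) ^ 3 /
      (1 + (u / (1 + u) ^ 2) ^ ((k : ℤ) - 2) *
        ((1 - Real.sqrt (1 - 4 * (u / (1 + u) ^ 2))) / 2) ^ 3) =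
      (1 - u ^ 3) / ((1 - u) * (1 + u) ^ 2) *
        (u ^ (k + 1) / (1 + u) ^ (2 * k - 1)) /
        (1 + u ^ (k + 1) / (1 + u) ^ (2 * k - 1)) :=
  substitution_Rk_general k hk u hu
end
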